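/- arXiv:1306.0057 — 4 statements merged into one kernel-verified Lean document; each statement's English description precedes it below -/
import Mathlib

section
/- Let C = {x ∈ R^n : E_{γ_k} x ∈ C_k, k = 1,...,l} where the C_k are proper convex cones, the γ_k cover {1,...,n}, and there is x̄ with E_{γ_k} x̄ ∈ int C_k for all k. Then the dual cone of C equals the set of all sums ∑_{k=1}^l E_{γ_k}^T s̃_k with s̃_k ∈ C_k^*, where C_k^* is the dual cone of C_k. -/
/-- `E_γ` : extraction of the subvector of `x` indexed by `γ`. -/
def Eext {n : ℕ} (γ : Finset (Fin n)) (x : Fin n → ℝ) : {i // i ∈ γ} → ℝ :=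
  fun i => x i.1

/-- `E_γᵀ` : embedding of a `|γ|`-vector into `ℝⁿ` by zero-filling. -/
def Eemb {n : ℕ} (γ : Finset (Fin n)) (y : {i // i ∈ γ} → ℝ) : Fin n → ℝ :=
  fun i => if h : i ∈ γ then y ⟨i, h⟩ else 0

/-!
The inclusion `∑ₖ E_{γₖ}ᵀ C_k^* ⊆ C^*` is the adjoint identity `⟪u, E_γᵀ s⟫ = ⟪E_γ u, s⟫`.
For the converse it suffices, by the bipolar theorem, that `D = ∑ₖ E_{γₖ}ᵀ C_k^*` is closed and
that `D^* ⊆ C`; the latter is the bipolar theorem for each `C_k`, tested on `E_{γₖ}ᵀ s`.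
`D` is the image of the closed cone `∏ₖ C_k^*` under a linear map, and such an image is closed
once no nonzero point of the cone is mapped to `0`. Here this is Slater's condition: if
`∑ₖ E_{γₖ}ᵀ sₖ = 0` then `∑ₖ ⟪E_{γₖ} x̄, sₖ⟫ = 0`, each term is nonnegative, and a dual element
vanishing at an interior point of `C_k` is zero.
-/

open Filter Topology Set

section Coordinates

variable {ι : Type*} [Fintype ι]

theorem PointedCone.mem_of_forall_dotProduct_nonneg {K : PointedCone ℝ (ι → ℝ)}
    (hK : IsClosed (K : Set (ι → ℝ))) {x : ι → ℝ}
    (hx : ∀ y, (∀ z ∈ K, 0 ≤ z ⬝ᵥ y) → 0 ≤ x ⬝ᵥ y) : x ∈ K := by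
  classical
  by_contra hxK
  obtain ⟨f, hfK, hfx⟩ := ProperCone.hyperplane_separation_point
    ({ toSubmodule := K, isClosed' := hK } : ProperCone ℝ (ι → ℝ)) hxK
  have hf (z : ι → ℝ) : f z = z ⬝ᵥ fun i => f fun j => if i = j then 1 else 0 := by
    simpa [dotProduct] using f.toLinearMap.pi_apply_eq_sum_univ z
  rw [hf] at hfx
  exact hfx.not_ge (hx _ fun z hz => hf z ▸ hfK z hz)

theorem eq_zero_of_mem_interior_of_dotProduct_eq_zero {C : Set (ι → ℝ)} {x s : ι → ℝ}
    (hx : x ∈ interior C) (hs : ∀ u ∈ C, 0 ≤ u ⬝ᵥ s) (hxs : x ⬝ᵥ s = 0) : s = 0 := by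
  have hnear : ∀ᶠ t in 𝓝[>] (0 : ℝ), x - t • s ∈ C := by
    refine eventually_nhdsWithin_of_eventually_nhds ?_
    have hlim : Tendsto (fun t : ℝ => x - t • s) (𝓝 0) (𝓝 x) := by
      simpa using tendsto_const_nhds.sub ((tendsto_id (x := 𝓝 (0 : ℝ))).smul_const s)
    exact hlim (mem_interior_iff_mem_nhds.1 hx)
  obtain ⟨t, htC, ht⟩ := (hnear.and self_mem_nhdsWithin).exists
  have hts := hs _ htC
  rw [sub_dotProduct, smul_dotProduct, hxs, smul_eq_mul] at hts
  have hss : s ⬝ᵥ s ≤ 0 := by nlinarith [show (0 : ℝ) < t from ht]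
  exact dotProduct_self_eq_zero.1 (hss.antisymm (by simpa using dotProduct_star_self_nonneg s))

end Coordinates

section ClosedImage

variable {E F : Type*} [NormedAddCommGroup E] [NormedSpace ℝ E] [FiniteDimensional ℝ E]
  [NormedAddCommGroup F] [NormedSpace ℝ F] (f : E →ₗ[ℝ] F) {K : PointedCone ℝ E}

theorem PointedCone.exists_pos_mul_norm_le_norm_map (hK : IsClosed (K : Set E))
    (hker : ∀ x ∈ K, f x = 0 → x = 0) : ∃ c > 0, ∀ x ∈ K, c * ‖x‖ ≤ ‖f x‖ := by
  have hcpt : IsCompact ((K : Set E) ∩ Metric.sphere 0 1) :=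
    (isCompact_sphere 0 1).inter_left hK
  obtain ⟨c, hc, hcf⟩ := hcpt.exists_forall_le' (f := fun x => ‖f x‖)
    (LinearMap.continuous_of_finiteDimensional f).norm.continuousOn (a := 0)
    fun x ⟨hxK, hx1⟩ => norm_pos_iff.2 fun hfx => by simp [hker x hxK hfx] at hx1
  refine ⟨c, hc, fun x hxK => ?_⟩
  rcases eq_or_ne x 0 with rfl | hx0
  · simp
  have hnx : 0 < ‖x‖ := norm_pos_iff.2 hx0
  have hcx := hcf (‖x‖⁻¹ • x) ⟨K.smul_mem (inv_nonneg.2 hnx.le) hxK, by simp [norm_smul, hnx.ne']⟩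
  rw [map_smul, norm_smul, norm_inv, norm_norm, le_inv_mul_iff₀ hnx] at hcx
  linarith

theorem PointedCone.isClosed_map_of_ker (hK : IsClosed (K : Set E))
    (hker : ∀ x ∈ K, f x = 0 → x = 0) : IsClosed (K.map f : Set F) := by
  obtain ⟨c, hc, hcf⟩ := K.exists_pos_mul_norm_le_norm_map f hK hker
  rw [PointedCone.coe_map]
  refine isClosed_of_closure_subset fun y hy => ?_
  -- preimages of points near `y` lie in a fixed ball, whose intersection with `K` is compact
  set R := (‖y‖ + 1) / c
  have hcpt : IsCompact (f '' (K ∩ Metric.closedBall 0 R)) :=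
    ((isCompact_closedBall 0 R).inter_left hK).image (LinearMap.continuous_of_finiteDimensional f)
  have hyR : y ∈ closure (f '' (K ∩ Metric.closedBall 0 R)) := by
    rw [mem_closure_iff_nhds] at hy ⊢
    intro U hU
    obtain ⟨_, ⟨hxU, hxy⟩, x, hxK, rfl⟩ :=
      hy (U ∩ Metric.ball y 1) (inter_mem hU (Metric.ball_mem_nhds y one_pos))
    refine ⟨f x, hxU, x, ⟨hxK, ?_⟩, rfl⟩
    rw [mem_ball_iff_norm] at hxy
    rw [mem_closedBall_zero_iff, le_div_iff₀ hc]
    linarith [hcf x hxK, norm_sub_norm_le (f x) y]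
  exact image_mono inter_subset_left (hcpt.isClosed.closure_subset hyR)

end ClosedImage

def PointedCone.ofConvex {E : Type*} [AddCommGroup E] [Module ℝ E] (s : Set E)
    (hconv : Convex ℝ s) (hcone : ∀ c : ℝ, 0 ≤ c → ∀ u ∈ s, c • u ∈ s) (hne : s.Nonempty) :
    PointedCone ℝ E :=
  ofConeComb s hne fun x hx y hy a ha b hb => by
    have hmid := hconv (hcone a ha x hx) (hcone b hb y hy) (by norm_num : (0 : ℝ) ≤ 1 / 2)
      (by norm_num : (0 : ℝ) ≤ 1 / 2) (by norm_num)
    convert hcone 2 (by norm_num) _ hmid using 1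
    module

section Embedding

variable {n l : ℕ}

theorem dotProduct_Eemb (γ : Finset (Fin n)) (u : Fin n → ℝ) (y : {i // i ∈ γ} → ℝ) :
    u ⬝ᵥ Eemb γ y = Eext γ u ⬝ᵥ y := by
  rw [dotProduct, ← Finset.sum_subset γ.subset_univ fun i _ hi => by simp [Eemb, hi],
    ← Finset.sum_attach γ, dotProduct, Finset.univ_eq_attach]
  exact Finset.sum_congr rfl fun i _ => by simp [Eemb, Eext]

def sumEemb (γ : Fin l → Finset (Fin n)) :
    ((k : Fin l) → {i // i ∈ γ k} → ℝ) →ₗ[ℝ] (Fin n → ℝ) where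
  toFun st := ∑ k, Eemb (γ k) (st k)
  map_add' st st' := by
    rw [← Finset.sum_add_distrib]
    refine Finset.sum_congr rfl fun k _ => funext fun i => ?_
    by_cases hi : i ∈ γ k <;> simp [Eemb, hi]
  map_smul' c st := by
    rw [Finset.smul_sum]
    refine Finset.sum_congr rfl fun k _ => funext fun i => ?_
    by_cases hi : i ∈ γ k <;> simp [Eemb, hi]

theorem dotProduct_sumEemb (γ : Fin l → Finset (Fin n)) (u : Fin n → ℝ)
    (st : (k : Fin l) → {i // i ∈ γ k} → ℝ) :
    u ⬝ᵥ sumEemb γ st = ∑ k, Eext (γ k) u ⬝ᵥ st k := by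
  simp only [sumEemb, LinearMap.coe_mk, AddHom.coe_mk, dotProduct_sum, dotProduct_Eemb]

end Embedding

section DualOfIntersection

variable {n l : ℕ} (γ : Fin l → Finset (Fin n)) (C : (k : Fin l) → Set ({i // i ∈ γ k} → ℝ))

def sumDualCone : PointedCone ℝ (Fin n → ℝ) :=
  PointedCone.map (sumEemb γ)
    (Submodule.pi univ fun k => PointedCone.dual (dotProductBilin ℝ ℝ) (C k))

theorem mem_sumDualCone {v : Fin n → ℝ} :
    v ∈ sumDualCone γ C ↔
      ∃ st : (k : Fin l) → {i // i ∈ γ k} → ℝ,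
        (∀ k, ∀ u ∈ C k, 0 ≤ u ⬝ᵥ st k) ∧ sumEemb γ st = v := by
  simp [sumDualCone, PointedCone.mem_map]

variable {γ C}

theorem dotProduct_nonneg_of_mem_sumDualCone {u v : Fin n → ℝ} (hu : ∀ k, Eext (γ k) u ∈ C k)
    (hv : v ∈ sumDualCone γ C) : 0 ≤ u ⬝ᵥ v := by
  obtain ⟨st, hst, rfl⟩ := (mem_sumDualCone γ C).1 hv
  rw [dotProduct_sumEemb]
  exact Finset.sum_nonneg fun k _ => hst k _ (hu k)

theorem isClosed_sumDualCone {xb : Fin n → ℝ} (hxb : ∀ k, Eext (γ k) xb ∈ interior (C k)) :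
    IsClosed (sumDualCone γ C : Set (Fin n → ℝ)) := by
  refine PointedCone.isClosed_map_of_ker _ ?_ fun st hst hst0 => ?_
  · rw [Submodule.coe_pi]
    exact isClosed_set_pi fun k _ => PointedCone.isClosed_dual fun u =>
      LinearMap.continuous_of_finiteDimensional _
  · have hsum : ∑ k, Eext (γ k) xb ⬝ᵥ st k = 0 := by
      rw [← dotProduct_sumEemb, hst0, dotProduct_zero]
    have hterm := (Finset.sum_eq_zero_iff_of_nonneg fun k _ =>
      hst k (mem_univ k) (interior_subset (hxb k))).1 hsum
    funext k
    exact eq_zero_of_mem_interior_of_dotProduct_eq_zero (hxb k)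
      (fun u hu => hst k (mem_univ k) hu) (hterm k (Finset.mem_univ k))

theorem Eext_mem_of_forall_dotProduct_nonneg (hconv : ∀ k, Convex ℝ (C k))
    (hcone : ∀ k, ∀ c : ℝ, 0 ≤ c → ∀ u ∈ C k, c • u ∈ C k) (hclosed : ∀ k, IsClosed (C k))
    (hne : ∀ k, (C k).Nonempty) {y : Fin n → ℝ} (hy : ∀ d ∈ sumDualCone γ C, 0 ≤ d ⬝ᵥ y)
    (k : Fin l) : Eext (γ k) y ∈ C k := by
  refine PointedCone.mem_of_forall_dotProduct_nonneg
    (K := .ofConvex (C k) (hconv k) (hcone k) (hne k)) (hclosed k) fun s hs => ?_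
  have hmem : sumEemb γ (Pi.single k s) ∈ sumDualCone γ C := by
    refine (mem_sumDualCone γ C).2 ⟨_, fun k' u hu => ?_, rfl⟩
    rcases eq_or_ne k' k with rfl | hk
    · simpa using hs u hu
    · simp [Pi.single_eq_of_ne hk]
  have hys := hy _ hmem
  rwa [dotProduct_comm, dotProduct_sumEemb, Fintype.sum_eq_single k fun k' hk => by
    simp [Pi.single_eq_of_ne hk], Pi.single_eq_same] at hys

end DualOfIntersection

theorem stmt1_general {n l : ℕ} (γ : Fin l → Finset (Fin n))
    (C : (k : Fin l) → Set ({i // i ∈ γ k} → ℝ))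
    (hconv : ∀ k, Convex ℝ (C k))
    (hcone : ∀ k, ∀ c : ℝ, 0 ≤ c → ∀ u ∈ C k, c • u ∈ C k)
    (hclosed : ∀ k, IsClosed (C k))
    (hslater : ∃ xb : Fin n → ℝ, ∀ k, Eext (γ k) xb ∈ interior (C k)) :
    {v : Fin n → ℝ | ∀ u ∈ {x : Fin n → ℝ | ∀ k, Eext (γ k) x ∈ C k},
        0 ≤ ∑ i, u i * v i}
    = {s : Fin n → ℝ | ∃ st : (k : Fin l) → ({i // i ∈ γ k} → ℝ),
        (∀ k, ∀ u ∈ C k, 0 ≤ ∑ i : {i // i ∈ γ k}, u i * st k i) ∧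
        s = ∑ k, Eemb (γ k) (st k)} := by
  obtain ⟨xb, hxb⟩ := hslater
  have hne k : (C k).Nonempty := ⟨_, interior_subset (hxb k)⟩
  refine Set.ext fun v => ⟨fun hv => ?_, ?_⟩
  · have hvD : v ∈ sumDualCone γ C :=
      PointedCone.mem_of_forall_dotProduct_nonneg (isClosed_sumDualCone hxb) fun y hy =>
        dotProduct_comm y v ▸ hv y (Eext_mem_of_forall_dotProduct_nonneg hconv hcone hclosed hne hy)
    obtain ⟨st, hst, rfl⟩ := (mem_sumDualCone γ C).1 hvD
    exact ⟨st, hst, rfl⟩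
  · rintro ⟨st, hst, rfl⟩ u hu
    exact dotProduct_nonneg_of_mem_sumDualCone hu ((mem_sumDualCone γ C).2 ⟨st, hst, rfl⟩)

theorem stmt1 {n l : ℕ} (γ : Fin l → Finset (Fin n))
    (C : (k : Fin l) → Set ({i // i ∈ γ k} → ℝ))
    (hconv : ∀ k, Convex ℝ (C k))
    (hcone : ∀ k, ∀ c : ℝ, 0 ≤ c → ∀ u ∈ C k, c • u ∈ C k)
    (hclosed : ∀ k, IsClosed (C k))
    (hpointed : ∀ k, C k ∩ (-(C k)) = {0})
    (hint : ∀ k, (interior (C k)).Nonempty)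
    (hcover : ∀ i : Fin n, ∃ k, i ∈ γ k)
    (hslater : ∃ xb : Fin n → ℝ, ∀ k, Eext (γ k) xb ∈ interior (C k)) :
    {v : Fin n → ℝ | ∀ u ∈ {x : Fin n → ℝ | ∀ k, Eext (γ k) x ∈ C k},
        0 ≤ ∑ i, u i * v i}
    = {s : Fin n → ℝ | ∃ st : (k : Fin l) → ({i // i ∈ γ k} → ℝ),
        (∀ k, ∀ u ∈ C k, 0 ≤ ∑ i : {i // i ∈ γ k}, u i * st k i) ∧
        s = ∑ k, Eemb (γ k) (st k)} :=
  stmt1_general γ C hconv hcone hclosed hslater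
end

section
/- A spanning tree of the intersection graph of index sets γ_1,...,γ_l that satisfies the running intersection property is a maximum weight spanning tree, where the weight of edge {i,j} is |γ_i ∩ γ_j|. -/
/-- The intersection graph of the index sets `γ₁, …, γ_l`. -/
def interGraph {l n : ℕ} (γ : Fin l → Finset (Fin n)) : SimpleGraph (Fin l) where
  Adj i j := i ≠ j ∧ (γ i ∩ γ j).Nonempty
  symm := ⟨fun i j h => ⟨h.1.symm, by rw [Finset.inter_comm]; exact h.2⟩⟩
  loopless := ⟨fun i h => h.1 rfl⟩

/-- The running intersection property for a (spanning) tree `T` of the intersection graph: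
`γ i ∩ γ j ⊆ γ k` whenever `γ k` lies on the path between `γ i` and `γ j` in `T`. -/
def RIP {l n : ℕ} (γ : Fin l → Finset (Fin n)) (T : SimpleGraph (Fin l)) : Prop :=
  ∀ (i j k : Fin l) (p : T.Walk i j), p.IsPath → k ∈ p.support → γ i ∩ γ j ⊆ γ k

/-- The weight of a spanning tree: sum over edges `{i,j}` of `|γ i ∩ γ j|`. -/
noncomputable def treeWeight {l n : ℕ} (γ : Fin l → Finset (Fin n))
    (T : SimpleGraph (Fin l)) : ℕ :=
  ∑ e ∈ T.edgeSet.toFinite.toFinset,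
    Sym2.lift ⟨fun i j => (γ i ∩ γ j).card, fun i j => by simp [Finset.inter_comm]⟩ e

/-! Double counting: the weight of any graph `G` on the index sets is `∑ x, e_G(s_x)`, where
`s_x = {i | x ∈ γ i}` and `e_G(s)` counts the edges of `G` inside `s`. For any tree `T'` the
edges inside `s_x` form a forest, so `e_{T'}(s_x) ≤ |s_x| - 1`. The running intersection property
says that `s_x` contains every `T`-path between its elements, so `T` induces a tree on `s_x` and
`e_T(s_x) = |s_x| - 1`. -/

open Finset

namespace SimpleGraph

variable {V : Type*} {G : SimpleGraph V}

lemma IsAcyclic.card_edgeFinset_le [Fintype V] [Fintype G.edgeSet] (hG : G.IsAcyclic) :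
    #G.edgeFinset ≤ Fintype.card V - 1 := by
  cases isEmpty_or_nonempty V
  · simp [card_eq_zero, Subsingleton.elim G ⊥]
  classical
  obtain ⟨F, hGF, -, hF⟩ := connected_top.exists_isTree_le_of_le_of_isAcyclic le_top hG
  have hcard := hF.card_edgeFinset
  have hmono := card_le_card (edgeFinset_mono hGF)
  omega

lemma IsTree.induce_isTree {s : Set V} (hG : G.IsTree) (hs : s.Nonempty)
    (hconvex :
      ∀ u v (p : G.Walk u v), p.IsPath → u ∈ s → v ∈ s → ∀ w ∈ p.support, w ∈ s) :
    (G.induce s).IsTree := by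
  refine ⟨?_, hG.isAcyclic.induce s⟩
  have : Nonempty s := hs.to_subtype
  refine .mk fun ⟨u, hu⟩ ⟨v, hv⟩ => ?_
  obtain ⟨p, hp, -⟩ := hG.existsUnique_path u v
  have hsupp : {w | w ∈ p.support} ⊆ s := fun w hw => hconvex u v p hp hu hv w hw
  exact (p.connected_induce_support ⟨u, p.start_mem_support⟩ ⟨v, p.end_mem_support⟩).map
    (G.induceHomOfLE hsupp).toHom

end SimpleGraph

open SimpleGraph

lemma treeWeight_eq_sum_card_edgeFinset_induce {l n : ℕ} (γ : Fin l → Finset (Fin n))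
    (G : SimpleGraph (Fin l)) [DecidableRel G.Adj] :
    treeWeight γ G = ∑ x, #(G.induce {i | x ∈ γ i}).edgeFinset := by
  classical
  set r : Sym2 (Fin l) → Fin n → Prop := fun e x => ∀ i ∈ e, x ∈ γ i
  have hE : G.edgeSet.toFinite.toFinset = G.edgeFinset := by ext; simp
  have hedge (e : Sym2 (Fin l)) :
      Sym2.lift ⟨fun i j => #(γ i ∩ γ j), fun i j => by simp [inter_comm]⟩ e =
        #(univ.bipartiteAbove r e) := by
    induction e with
    | _ i j => simp [r, bipartiteAbove, filter_and]
  have hinduce (x : Fin n) :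
      #(G.induce {i | x ∈ γ i}).edgeFinset = #(G.edgeFinset.bipartiteBelow r x) := by
    rw [← card_map, map_edgeFinset_induce, bipartiteBelow, ← filter_mem_eq_inter]
    simp [r, mem_sym2_iff]
  simp_rw [treeWeight, hE, hedge, hinduce]
  exact sum_card_bipartiteAbove_eq_sum_card_bipartiteBelow _

theorem stmt2_general {l n : ℕ} (γ : Fin l → Finset (Fin n)) (T : SimpleGraph (Fin l))
    (hTtree : T.IsTree) (hrip : RIP γ T) :
    ∀ T' : SimpleGraph (Fin l), T' ≤ interGraph γ → T'.IsTree →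
      treeWeight γ T' ≤ treeWeight γ T := by
  classical
  intro T' _ hT'
  rw [treeWeight_eq_sum_card_edgeFinset_induce, treeWeight_eq_sum_card_edgeFinset_induce]
  refine sum_le_sum fun x _ => ?_
  set s : Set (Fin l) := {i | x ∈ γ i}
  calc #(T'.induce s).edgeFinset ≤ Fintype.card s - 1 :=
        (hT'.isAcyclic.induce s).card_edgeFinset_le
    _ ≤ #(T.induce s).edgeFinset := by
      rcases s.eq_empty_or_nonempty with hs | hs
      · simp [hs]
      have hconvex :
          ∀ u v (p : T.Walk u v), p.IsPath → u ∈ s → v ∈ s → ∀ w ∈ p.support, w ∈ s :=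
        fun u v p hp hu hv w hw => hrip u v w p hp hw (mem_inter.2 ⟨hu, hv⟩)
      have hcard := (hTtree.induce_isTree hs hconvex).card_edgeFinset
      omega

theorem stmt2 {l n : ℕ} (γ : Fin l → Finset (Fin n)) (T : SimpleGraph (Fin l))
    (hTsub : T ≤ interGraph γ) (hTtree : T.IsTree) (hrip : RIP γ T) :
    ∀ T' : SimpleGraph (Fin l), T' ≤ interGraph γ → T'.IsTree →
      treeWeight γ T' ≤ treeWeight γ T :=
  stmt2_general γ T hTtree hrip
end

section
/- Let V be a chordal symmetric sparsity pattern of order p containing all diagonal entries, with cliques β_1,...,β_l. A matrix X ∈ S^p_V has a positive semidefinite completion (i.e., there exists a positive semidefinite Z ∈ S^p agreeing with X on all positions in V) if and only if every dense principal submatrix X_{β_k β_k}, k = 1,...,l, is positive semidefinite. -/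
/-- A graph is chordal if every cycle of length greater than three has a chord,
i.e. an edge of the graph joining two vertices of the cycle that is not an edge
of the cycle. -/
def Chordal {p : ℕ} (G : SimpleGraph (Fin p)) : Prop :=
  ∀ (v : Fin p) (w : G.Walk v v), w.IsCycle → 3 < w.length →
    ∃ a b : Fin p, a ∈ w.support ∧ b ∈ w.support ∧ G.Adj a b ∧ s(a, b) ∉ w.edges

/-- A maximal clique of a graph. -/
def IsMaxClique {p : ℕ} (G : SimpleGraph (Fin p)) (s : Finset (Fin p)) : Prop :=
  G.IsClique (s : Set (Fin p)) ∧
    ∀ t : Finset (Fin p), G.IsClique (t : Set (Fin p)) → s ⊆ t → s = t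

/-- The sparsity graph `G_V` of a symmetric sparsity pattern `V`. -/
def spGraph {p : ℕ} (V : Set (Fin p × Fin p))
    (hs : ∀ i j, (i, j) ∈ V → (j, i) ∈ V) : SimpleGraph (Fin p) where
  Adj i j := i ≠ j ∧ (i, j) ∈ V
  symm := ⟨fun i j h => ⟨h.1.symm, hs i j h.2⟩⟩
  loopless := ⟨fun _ h => h.1 rfl⟩

/-!
A chordal graph has a simplicial vertex `v`, one whose neighbours form a clique: if `w` is not
adjacent to `v`, the neighbours of `v` touching the component `C` of `w` in `G - N[v]` form a
clique, since two non-adjacent ones would close a chordless cycle through `v` and `C`. By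
induction, `G[C ∪ N(C)]` has a simplicial vertex outside the clique `N(C)`, hence in `C`, and it
is simplicial in `G` as well.

Removing `v`, the rest of `X` has a positive semidefinite completion `W` by induction, and it
remains to fill in the row of `v`. Its known part `x` is supported on the clique `N(v)`, so the
block `[[a, xᵀ], [x, W_NN]]` of `X` on `N[v]`, where `a = X v v`, is positive semidefinite.
This forces `x` into the range of `W_NN`, say `x = W_NN y` with `yᵀ W_NN y ≤ a`; extending `y`
by zero, the matrix `[[a, (W y)ᵀ], [W y, W]]` is a positive semidefinite completion.
-/

namespace Matrix

variable {n m : Type*}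

-- The matrix `[[a, xᵀ], [x, C]]`, its new first row and column being indexed by `none`.
def border (a : ℝ) (x : n → ℝ) (C : Matrix n n ℝ) : Matrix (Option n) (Option n) ℝ :=
  of fun i j => Option.elim i (Option.elim j a x) fun i => Option.elim j (x i) (C i)

@[simp] lemma border_none_none (a x) (C : Matrix n n ℝ) : border a x C none none = a := rfl
@[simp] lemma border_none_some (a x) (C : Matrix n n ℝ) (j) :
    border a x C none (some j) = x j := rfl
@[simp] lemma border_some_none (a x) (C : Matrix n n ℝ) (i) :
    border a x C (some i) none = x i := rfl
@[simp] lemma border_some_some (a x) (C : Matrix n n ℝ) (i j) :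
    border a x C (some i) (some j) = C i j := rfl

lemma IsHermitian.border {C : Matrix n n ℝ} (hC : C.IsHermitian) (a : ℝ) (x : n → ℝ) :
    (border a x C).IsHermitian := by
  ext (_ | i) (_ | j)
  iterate 3 rfl
  simpa using hC.apply i j

variable [Fintype n] [Fintype m]

theorem IsHermitian.exists_mulVec_eq {C : Matrix n n ℝ} (hC : C.IsHermitian)
    {x : n → ℝ} (hx : ∀ z, C *ᵥ z = 0 → x ⬝ᵥ z = 0) : ∃ y, C *ᵥ y = x := by
  classical
  have hT : (toEuclideanLin C).IsSymmetric := isSymmetric_toEuclideanLin_iff.mpr hC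
  have hmem : WithLp.toLp 2 x ∈ LinearMap.range (toEuclideanLin C) := by
    rw [← Submodule.orthogonal_orthogonal (LinearMap.range _), hT.orthogonal_range,
      Submodule.mem_orthogonal]
    intro z hz
    rw [EuclideanSpace.inner_eq_star_dotProduct, star_trivial]
    exact hx _ (by simpa using congrArg WithLp.ofLp hz)
  obtain ⟨y, hy⟩ := hmem
  exact ⟨y.ofLp, by simpa using congrArg WithLp.ofLp hy⟩

lemma dotProduct_border_mulVec (a : ℝ) (x : n → ℝ) (C : Matrix n n ℝ) (z : Option n → ℝ) :
    z ⬝ᵥ border a x C *ᵥ z =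
      a * (z none * z none) + 2 * (x ⬝ᵥ (z ∘ some)) * z none + (z ∘ some) ⬝ᵥ C *ᵥ (z ∘ some) := by
  simp only [dotProduct, mulVec, Fintype.sum_option, border_none_none, border_none_some,
    border_some_none, border_some_some, Function.comp_apply, mul_add, Finset.mul_sum,
    Finset.sum_add_distrib, Finset.sum_mul]
  have hcross : ∑ i, z (some i) * (x i * z none) + ∑ i, z none * (x i * z (some i)) =
      ∑ i, 2 * (x i * z (some i)) * z none := by
    rw [← Finset.sum_add_distrib]
    exact Finset.sum_congr rfl fun i _ => by ring
  linarith

lemma PosSemidef.border_mulVec {W : Matrix n n ℝ} (hW : W.PosSemidef) {y : n → ℝ} {a : ℝ}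
    (ha : y ⬝ᵥ W *ᵥ y ≤ a) : (border a (W *ᵥ y) W).PosSemidef := by
  have hsymm : ∀ u, y ⬝ᵥ W *ᵥ u = (W *ᵥ y) ⬝ᵥ u := fun u => by
    rw [dotProduct_mulVec, ← mulVec_transpose, ← conjTranspose_eq_transpose_of_trivial, hW.1]
  refine .of_dotProduct_mulVec_nonneg (hW.isHermitian.border a _) fun z => ?_
  rw [star_trivial, dotProduct_border_mulVec]
  set t := z none
  set u := z ∘ some
  -- completing the square: the form equals `(a - yᵀWy) t² + (ty + u)ᵀ W (ty + u)`
  have hsq : (t • y + u) ⬝ᵥ W *ᵥ (t • y + u) =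
      t * t * (y ⬝ᵥ W *ᵥ y) + 2 * ((W *ᵥ y) ⬝ᵥ u) * t + u ⬝ᵥ W *ᵥ u := by
    simp only [mulVec_add, mulVec_smul, dotProduct_add, add_dotProduct, dotProduct_smul,
      smul_dotProduct, smul_eq_mul, hsymm, dotProduct_comm u (W *ᵥ y)]
    ring
  have hW' := hW.dotProduct_mulVec_nonneg (t • y + u)
  rw [star_trivial] at hW'
  nlinarith [mul_nonneg (sub_nonneg.2 ha) (mul_self_nonneg t)]

lemma PosSemidef.exists_mulVec_eq_of_border {C : Matrix n n ℝ} {x : n → ℝ} {a : ℝ}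
    (h : (border a x C).PosSemidef) : ∃ y, C *ᵥ y = x ∧ y ⬝ᵥ C *ᵥ y ≤ a := by
  have hq : ∀ t u, 0 ≤ a * (t * t) + 2 * (x ⬝ᵥ u) * t + u ⬝ᵥ C *ᵥ u := fun t u => by
    simpa [dotProduct_border_mulVec, Function.comp_def] using
      h.dotProduct_mulVec_nonneg (Option.elim · t u)
  have hker : ∀ z, C *ᵥ z = 0 → x ⬝ᵥ z = 0 := fun z hz => by
    have := discrim_le_zero (K := ℝ) (c := 0) fun t => by simpa [hz] using hq t z
    rw [discrim] at this
    nlinarith [sq_nonneg (x ⬝ᵥ z)]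
  have hC : C.PosSemidef := h.submatrix some
  obtain ⟨y, hy⟩ := hC.isHermitian.exists_mulVec_eq hker
  refine ⟨y, hy, ?_⟩
  have := hq (-1) y
  rw [← hy, dotProduct_comm (C *ᵥ y)] at this
  linarith

lemma PosSemidef.exists_border_mulVec {W : Matrix n n ℝ} (hW : W.PosSemidef)
    {f : m → n} (hf : Function.Injective f) {a : ℝ} {x : m → ℝ}
    (h : (border a x (W.submatrix f f)).PosSemidef) :
    ∃ y, (border a (W *ᵥ y) W).PosSemidef ∧ ∀ i, (W *ᵥ y) (f i) = x i := by
  obtain ⟨y₀, hy₀, hle⟩ := h.exists_mulVec_eq_of_border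
  set y := Function.extend f y₀ 0
  have hpush : ∀ g : n → ℝ, g ⬝ᵥ y = (g ∘ f) ⬝ᵥ y₀ := fun g =>
    (Fintype.sum_of_injective f hf _ _ (fun j hj => by simp [y, Function.extend_apply' _ _ _ hj])
      fun i => by simp [y, hf.extend_apply]).symm
  have hWy : (W *ᵥ y) ∘ f = W.submatrix f f *ᵥ y₀ := funext fun i => hpush (W (f i))
  refine ⟨y, hW.border_mulVec ?_, fun i => congrFun (hWy.trans hy₀) i⟩
  calc y ⬝ᵥ W *ᵥ y = ((W *ᵥ y) ∘ f) ⬝ᵥ y₀ := by rw [dotProduct_comm, hpush]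
    _ = y₀ ⬝ᵥ W.submatrix f f *ᵥ y₀ := by rw [hWy, dotProduct_comm]
    _ ≤ a := hle

end Matrix

namespace SimpleGraph

variable {V : Type*} {G : SimpleGraph V}

-- `Chordal`, for an arbitrary vertex type.
def IsChordal (G : SimpleGraph V) : Prop :=
  ∀ (v : V) (w : G.Walk v v), w.IsCycle → 3 < w.length →
    ∃ a b : V, a ∈ w.support ∧ b ∈ w.support ∧ G.Adj a b ∧ s(a, b) ∉ w.edges

lemma IsChordal.of_embedding {W : Type*} {H : SimpleGraph W} (f : H ↪g G) (hG : G.IsChordal) :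
    H.IsChordal := by
  intro v w hw hlen
  obtain ⟨a, b, ha, hb, hab, hne⟩ :=
    hG (f v) (w.map f.toHom) (hw.map f.injective) (by rwa [Walk.length_map])
  rw [Walk.support_map, List.mem_map] at ha hb
  obtain ⟨a, ha, rfl⟩ := ha
  obtain ⟨b, hb, rfl⟩ := hb
  refine ⟨a, b, ha, hb, f.map_adj_iff.1 hab, fun he => hne ?_⟩
  rw [Walk.edges_map]
  exact List.mem_map_of_mem he

namespace Walk

lemma exists_shorter_of_adj_of_notMem_edges [DecidableEq V] {u w a b : V} (p : G.Walk u w)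
    (ha : a ∈ p.support) (hb : b ∈ p.support) (hab : G.Adj a b) (he : s(a, b) ∉ p.edges) :
    ∃ q : G.Walk u w, q.support ⊆ p.support ∧ q.length < p.length := by
  induction p with
  | nil =>
    rw [support_nil, List.mem_singleton] at ha hb
    exact absurd (ha.trans hb.symm) hab.ne
  | @cons u x w hux p ih =>
    have shortcut : ∀ {c}, c ∈ p.support → G.Adj u c → c ≠ x →
        ∃ q : G.Walk u w, q.support ⊆ (cons hux p).support ∧ q.length < (cons hux p).length :=
      fun hc huc hcx => ⟨cons huc (p.dropUntil _ hc),
        List.cons_subset_cons _ (p.support_dropUntil_subset_support hc),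
        by simpa using p.length_dropUntil_lt_length hc hcx⟩
    rw [support_cons, List.mem_cons] at ha hb
    rw [edges_cons, List.mem_cons, not_or] at he
    rcases ha with rfl | ha
    · exact shortcut (hb.resolve_left hab.ne.symm) hab (by rintro rfl; exact he.1 rfl)
    rcases hb with rfl | hb
    · exact shortcut ha hab.symm (by rintro rfl; exact he.1 (Sym2.eq_swap))
    obtain ⟨q, hq, hlen⟩ := ih ha hb he.2
    exact ⟨cons hux q, List.cons_subset_cons _ hq, by simpa using hlen⟩

lemma isCycle_cons_concat {v x y : V} {p : G.Walk x y} (hp : p.IsPath) (hv : v ∉ p.support)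
    (hxy : x ≠ y) (hx : G.Adj v x) (hy : G.Adj y v) : (cons hx (p.concat hy)).IsCycle := by
  rw [cons_isCycle_iff, edges_concat, List.concat_eq_append, List.mem_append, List.mem_singleton,
    not_or, Sym2.eq_iff]
  refine ⟨hp.concat hv _, fun h => hv (p.fst_mem_support_of_mem_edges h), ?_⟩
  rintro (⟨rfl, -⟩ | ⟨-, rfl⟩)
  exacts [hy.ne rfl, hxy rfl]

end Walk

open Walk in
theorem IsChordal.adj_of_walk_avoiding [DecidableEq V] (hG : G.IsChordal) {v x y : V}
    (hx : G.Adj v x) (hy : G.Adj v y) (hxy : x ≠ y) (p : G.Walk x y)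
    (hp : ∀ z ∈ p.support, z = x ∨ z = y ∨ z ≠ v ∧ ¬G.Adj v z) : G.Adj x y := by
  by_contra hnxy
  obtain ⟨P, hP, hmin⟩ := (measure fun q : G.Walk x y => q.length).wf.has_min
    {q | ∀ z ∈ q.support, z = x ∨ z = y ∨ z ≠ v ∧ ¬G.Adj v z} ⟨p, hp⟩
  set Q := P.bypass
  have hQ : ∀ z ∈ Q.support, z = x ∨ z = y ∨ z ≠ v ∧ ¬G.Adj v z :=
    fun z hz => hP z (P.support_bypass_subset_support hz)
  have hvQ : v ∉ Q.support := fun hv => by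
    rcases hQ v hv with h | h | h
    exacts [hx.ne h, hy.ne h, h.1 rfl]
  have hlen : 2 ≤ Q.length := by
    by_contra! h
    interval_cases hl : Q.length
    exacts [hxy (Q.eq_of_length_eq_zero hl), hnxy (Q.adj_of_length_eq_one hl)]
  set c : G.Walk v v := cons hx (Q.concat hy.symm)
  have hc : c.IsCycle := isCycle_cons_concat P.bypass_isPath hvQ hxy hx hy.symm
  have hsupp : ∀ z ∈ c.support, z = v ∨ z ∈ Q.support := by
    simp only [c, support_cons, support_concat, List.mem_cons, List.mem_append]
    tauto
  have hedges : s(v, x) ∈ c.edges ∧ s(y, v) ∈ c.edges ∧ Q.edges ⊆ c.edges := by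
    simp only [c, edges_cons, edges_concat, List.concat_eq_append]
    refine ⟨List.mem_cons_self, by simp, fun e he => by simp [he]⟩
  have chord_avoids_v : ∀ a b, a ∈ c.support → b ∈ c.support → G.Adj a b → s(a, b) ∉ c.edges →
      a ≠ v := by
    rintro a b - hb hab hab' rfl
    rcases hsupp b hb with rfl | hb
    · exact hab.ne rfl
    rcases hQ b hb with rfl | rfl | hb'
    exacts [hab' hedges.1, hab' (Sym2.eq_swap ▸ hedges.2.1), hb'.2 hab]
  obtain ⟨a, b, ha, hb, hab, hchord⟩ := hG v c hc (by simp [c]; omega)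
  obtain ⟨q, hq, hqlen⟩ := Q.exists_shorter_of_adj_of_notMem_edges
    ((hsupp a ha).resolve_left (chord_avoids_v a b ha hb hab hchord))
    ((hsupp b hb).resolve_left (chord_avoids_v b a hb ha hab.symm (by rwa [Sym2.eq_swap])))
    hab (fun h => hchord (hedges.2.2 h))
  exact hmin q (fun z hz => hQ z (hq hz)) (hqlen.trans_le P.length_bypass_le_length)

open Walk in
theorem IsChordal.isClique_boundary_of_component [DecidableEq V] (hG : G.IsChordal)
    {v w : V} {R : Set V} (hR : ∀ z ∈ R, z ≠ v ∧ ¬G.Adj v z) :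
    G.IsClique {x | G.Adj v x ∧ ∃ c, G.Adj x c ∧ ∃ p : G.Walk w c, ∀ z ∈ p.support, z ∈ R} := by
  rintro x ⟨hvx, c, hxc, p, hp⟩ y ⟨hvy, c', hyc', p', hp'⟩ hxy
  refine hG.adj_of_walk_avoiding hvx hvy hxy (cons hxc (p.reverse.append (p'.concat hyc'.symm)))
    fun z hz => ?_
  simp only [support_cons, mem_support_append_iff, support_reverse, support_concat,
    List.mem_cons, List.mem_append, List.mem_reverse, List.mem_nil_iff, or_false] at hz
  rcases hz with hz | hz | hz | hz
  exacts [Or.inl hz, Or.inr (Or.inr (hR z (hp z hz))), Or.inr (Or.inr (hR z (hp' z hz))),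
    Or.inr (Or.inl hz)]

open Walk in
theorem IsChordal.exists_clique_separator (hG : G.IsChordal) (S : Finset V) {v w : V}
    (hvS : v ∈ S) (hwS : w ∈ S) (hwv : w ≠ v) (hvw : ¬G.Adj v w) :
    ∃ S' ⊂ S, ∃ N : Set V, G.IsClique N ∧ w ∈ S' ∧ w ∉ N ∧
      ∀ s ∈ S', s ∉ N → s ≠ v ∧ ¬G.Adj v s ∧ G.neighborSet s ∩ S ⊆ S' := by
  classical
  -- `C` is the component of `w` in `G[S]` minus the closed neighbourhood of `v`
  set R : Set V := {z | z ∈ S ∧ z ≠ v ∧ ¬G.Adj v z}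
  set C : Set V := {c | ∃ p : G.Walk w c, ∀ z ∈ p.support, z ∈ R}
  set N : Set V := {x | G.Adj v x ∧ ∃ c, G.Adj x c ∧ c ∈ C}
  have hCR : C ⊆ R := fun c ⟨p, hp⟩ => hp c p.end_mem_support
  have hCstep : ∀ c ∈ C, ∀ z ∈ R, G.Adj c z → z ∈ C := by
    rintro c ⟨p, hp⟩ z hz hcz
    refine ⟨p.concat hcz, fun y hy => ?_⟩
    rw [support_concat, List.mem_append, List.mem_singleton] at hy
    exact hy.elim (hp y) (· ▸ hz)
  have hwC : w ∈ C := ⟨nil, by simpa [R] using ⟨hwS, hwv, hvw⟩⟩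
  refine ⟨S.filter (· ∈ C ∪ N), Finset.filter_ssubset.2 ⟨v, hvS, fun h =>
      h.elim (fun h => (hCR h).2.1 rfl) fun h => h.1.ne rfl⟩,
    N, hG.isClique_boundary_of_component (R := R) fun z hz => hz.2,
    Finset.mem_filter.2 ⟨hwS, Or.inl hwC⟩, fun h => hvw h.1, fun s hs hsN => ?_⟩
  obtain ⟨-, hsC⟩ := Finset.mem_filter.1 hs
  have hsC : s ∈ C := hsC.resolve_right hsN
  obtain ⟨-, hsv, hvs⟩ := hCR hsC
  refine ⟨hsv, hvs, fun y ⟨hsy, hyS⟩ => Finset.mem_filter.2 ⟨hyS, ?_⟩⟩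
  by_cases hyR : y ∈ R
  · exact Or.inl (hCstep s hsC y hyR hsy)
  · have hyv : y ≠ v := by rintro rfl; exact hvs hsy.symm
    exact Or.inr ⟨by_contra fun h => hyR ⟨hyS, hyv, h⟩, s, hsy.symm, hsC⟩

theorem IsChordal.exists_isClique_neighborSet_inter (hG : G.IsChordal) (S : Finset V)
    {K : Set V} (hK : G.IsClique K) {u : V} (hu : u ∈ S) (huK : u ∉ K) :
    ∃ s ∈ S, s ∉ K ∧ G.IsClique (G.neighborSet s ∩ S) := by
  classical
  induction S using Finset.strongInduction generalizing K u with | H S ih =>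
  by_cases hv : ∃ v ∈ S, ∃ w ∈ S, w ≠ v ∧ ¬G.Adj v w ∧ ∀ k ∈ K, k ∈ S → k = v ∨ G.Adj v k
  · obtain ⟨v, hvS, w, hwS, hwv, hvw, hKv⟩ := hv
    obtain ⟨S', hS'S, N, hN, hwS', hwN, hS'⟩ := hG.exists_clique_separator S hvS hwS hwv hvw
    obtain ⟨s, hs, hsN, hsS'⟩ := ih S' hS'S hN hwS' hwN
    obtain ⟨hsv, hvs, hsub⟩ := hS' s hs hsN
    have hsS : s ∈ S := hS'S.subset hs
    exact ⟨s, hsS, fun hsK => (hKv s hsK hsS).elim hsv hvs,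
      hsS'.subset (Set.subset_inter Set.inter_subset_left hsub)⟩
  push Not at hv
  by_cases hk : ∃ k ∈ K, k ∈ S
  · -- a vertex of `K` adjacent to all of `S` can be deleted
    obtain ⟨k, hkK, hkS⟩ := hk
    have hk_univ : ∀ w ∈ S, w ≠ k → G.Adj k w := fun w hw hwk => by
      by_contra hkw
      obtain ⟨k', hk'K, hk'S, hk'k, hkk'⟩ := hv k hkS w hw hwk hkw
      exact hkk' (hK hkK hk'K hk'k.symm)
    obtain ⟨s, hs, hsK, hsS⟩ := ih (S.erase k) (Finset.erase_ssubset hkS) hK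
      (Finset.mem_erase.2 ⟨by rintro rfl; exact huK hkK, hu⟩) huK
    refine ⟨s, Finset.mem_of_mem_erase hs, hsK, ?_⟩
    refine (hsS.insert fun b hb hkb => hk_univ b (Finset.mem_of_mem_erase hb.2) hkb.symm).subset ?_
    rintro y ⟨hsy, hyS⟩
    by_cases hyk : y = k
    · exact Or.inl hyk
    · exact Or.inr ⟨hsy, Finset.mem_erase.2 ⟨hyk, hyS⟩⟩
  · push Not at hk
    refine ⟨u, hu, huK, fun a ha b hb hab => ?_⟩
    by_contra hn
    obtain ⟨k, hkK, hkS, -⟩ := hv a ha.2 b hb.2 hab.symm hn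
    exact hk k hkK hkS

theorem IsChordal.exists_isClique_neighborSet [Finite V] [Nonempty V] (hG : G.IsChordal) :
    ∃ v, G.IsClique (G.neighborSet v) := by
  classical
  have := Fintype.ofFinite V
  obtain ⟨u⟩ := ‹Nonempty V›
  obtain ⟨s, -, -, hs⟩ := hG.exists_isClique_neighborSet_inter Finset.univ isClique_empty
    (Finset.mem_univ u) (Set.notMem_empty u)
  exact ⟨s, by simpa using hs⟩

end SimpleGraph

namespace Matrix

variable {α : Type*}

def IsPosSemidefOnCliques (G : SimpleGraph α) (X : Matrix α α ℝ) : Prop :=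
  ∀ s : Finset α, G.IsClique (s : Set α) → (X.submatrix ((↑) : s → α) (↑)).PosSemidef

variable {G : SimpleGraph α} {X : Matrix α α ℝ}

lemma IsPosSemidefOnCliques.submatrix (hX : X.IsPosSemidefOnCliques G) {m : Type*} [Fintype m]
    (f : m → α) (hf : G.IsClique (Set.range f)) : (X.submatrix f f).PosSemidef := by
  classical
  have hs : G.IsClique ((Finset.univ.image f : Finset α) : Set α) := by simpa using hf
  exact (hX _ hs).submatrix fun i => ⟨f i, by simp⟩

lemma IsPosSemidefOnCliques.comap {β : Type*} {H : SimpleGraph β}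
    (hX : X.IsPosSemidefOnCliques G) (f : H →g G) : (X.submatrix f f).IsPosSemidefOnCliques H := by
  intro t ht
  refine hX.submatrix (fun i : t => f i) ?_
  rintro _ ⟨i, rfl⟩ _ ⟨j, rfl⟩ hij
  exact f.map_adj (ht i.2 j.2 fun h => hij (congrArg _ h))

lemma isPosSemidefOnCliques_of_posSemidef {Z : Matrix α α ℝ} (hZ : Z.PosSemidef)
    (hZX : ∀ i j, i = j ∨ G.Adj i j → Z i j = X i j) : X.IsPosSemidefOnCliques G := by
  intro s hs
  convert hZ.submatrix ((↑) : s → α) using 1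
  ext i j
  by_cases h : (i : α) = j
  · exact (hZX _ _ (Or.inl h)).symm
  · exact (hZX _ _ (Or.inr (hs i.2 j.2 h))).symm

lemma IsPosSemidefOnCliques.posSemidef_border [Fintype α] (hX : X.IsPosSemidefOnCliques G)
    (hXs : X.IsSymm) {v : α} (hv : G.IsClique (G.neighborSet v))
    {W : Matrix {x // x ≠ v} {x // x ≠ v} ℝ}
    (hWX : ∀ i j : {x // x ≠ v}, (i : α) = j ∨ G.Adj i j → W i j = X i j) :
    (border (X v v) (fun u : {u : {x // x ≠ v} // G.Adj v u} => X v u)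
      (W.submatrix (↑) (↑))).PosSemidef := by
  classical
  let f (o : Option {u : {x // x ≠ v} // G.Adj v u}) : α :=
    Equiv.optionSubtypeNe v (o.map Subtype.val)
  have hfX : border (X v v) (fun u : {u : {x // x ≠ v} // G.Adj v u} => X v u)
      (W.submatrix (↑) (↑)) = X.submatrix f f := by
    ext (_ | i) (_ | j)
    · rfl
    · rfl
    · exact hXs.apply _ _
    · by_cases h : ((i : {x // x ≠ v}) : α) = j
      · exact hWX _ _ (Or.inl h)
      · exact hWX _ _ (Or.inr (hv i.2 j.2 h))
  rw [hfX]
  refine hX.submatrix f ((hv.insert fun b hb _ => hb).subset ?_)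
  rintro _ ⟨_ | u, rfl⟩
  exacts [Or.inl rfl, Or.inr u.2]

end Matrix

open Matrix SimpleGraph in
theorem SimpleGraph.IsChordal.exists_posSemidef_completion {α : Type*} [Fintype α]
    {G : SimpleGraph α} (hG : G.IsChordal) {X : Matrix α α ℝ} (hXs : X.IsSymm)
    (hX : X.IsPosSemidefOnCliques G) :
    ∃ Z : Matrix α α ℝ, Z.PosSemidef ∧ ∀ i j, i = j ∨ G.Adj i j → Z i j = X i j := by
  induction h : Fintype.card α using Nat.strong_induction_on generalizing α with | _ n ih =>
  rcases isEmpty_or_nonempty α with hα | hα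
  · exact ⟨0, .zero, fun i => isEmptyElim i⟩
  classical
  obtain ⟨v, hv⟩ := hG.exists_isClique_neighborSet
  let e := Equiv.optionSubtypeNe v
  let incl := Embedding.comap (Function.Embedding.subtype (· ≠ v)) G
  obtain ⟨W, hW, hWX⟩ := ih _ (h ▸ Fintype.card_subtype_lt (not_not.2 rfl)) (hG.of_embedding incl)
    (X := X.submatrix (↑) (↑)) (hXs.submatrix _) (hX.comap incl.toHom) rfl
  have hWX' : ∀ i j : {x // x ≠ v}, (i : α) = j ∨ G.Adj i j → W i j = X i j :=
    fun i j h => hWX i j (h.imp Subtype.ext id)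
  obtain ⟨y, hy, hyX⟩ :=
    hW.exists_border_mulVec Subtype.val_injective (hX.posSemidef_border hXs hv hWX')
  refine ⟨(border (X v v) (W *ᵥ y) W).submatrix e.symm e.symm, hy.submatrix _, ?_⟩
  intro i j hij
  obtain ⟨i, rfl⟩ := e.surjective i
  obtain ⟨j, rfl⟩ := e.surjective j
  simp only [submatrix_apply, Equiv.symm_apply_apply]
  rcases i with _ | i <;> rcases j with _ | j
  · rfl
  · exact hyX ⟨j, hij.resolve_left fun h => j.2 h.symm⟩
  · exact (hyX ⟨i, (hij.resolve_left i.2).symm⟩).trans (hXs.apply _ _)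
  · exact hWX' i j hij

open Matrix SimpleGraph in
theorem SimpleGraph.IsChordal.exists_posSemidef_completion_iff {α : Type*} [Fintype α]
    {G : SimpleGraph α} (hG : G.IsChordal) {X : Matrix α α ℝ} (hXs : X.IsSymm) :
    (∃ Z : Matrix α α ℝ, Z.PosSemidef ∧ ∀ i j, i = j ∨ G.Adj i j → Z i j = X i j) ↔
      X.IsPosSemidefOnCliques G :=
  ⟨fun ⟨_, hZ, hZX⟩ => isPosSemidefOnCliques_of_posSemidef hZ hZX,
    hG.exists_posSemidef_completion hXs⟩

lemma exists_isMaxClique_superset {p : ℕ} {G : SimpleGraph (Fin p)} {s : Finset (Fin p)}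
    (hs : G.IsClique (s : Set (Fin p))) : ∃ t, IsMaxClique G t ∧ s ⊆ t := by
  obtain ⟨t, hst, ht⟩ :=
    (Set.toFinite {t : Finset (Fin p) | G.IsClique (t : Set (Fin p))}).exists_le_maximal hs
  exact ⟨t, ⟨ht.1, fun u hu htu => le_antisymm htu (ht.2 hu htu)⟩, hst⟩

lemma isPosSemidefOnCliques_iff_of_isMaxClique {p l : ℕ} {G : SimpleGraph (Fin p)}
    {β : Fin l → Finset (Fin p)} (hcliques : ∀ k, IsMaxClique G (β k))
    (hall : ∀ s, IsMaxClique G s → ∃ k, s = β k) (X : Matrix (Fin p) (Fin p) ℝ) :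
    X.IsPosSemidefOnCliques G ↔
      ∀ k, (X.submatrix ((↑) : β k → Fin p) (↑)).PosSemidef := by
  refine ⟨fun hX k => hX _ (hcliques k).1, fun h s hs => ?_⟩
  obtain ⟨t, ht, hst⟩ := exists_isMaxClique_superset hs
  obtain ⟨k, rfl⟩ := hall t ht
  exact (h k).submatrix fun i : s => ⟨i, hst i.2⟩

theorem stmt12_general {p l : ℕ} (V : Set (Fin p × Fin p))
    (hs : ∀ i j, (i, j) ∈ V → (j, i) ∈ V)
    (hdiag : ∀ i, (i, i) ∈ V)
    (hchordal : Chordal (spGraph V hs))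
    (β : Fin l → Finset (Fin p))
    (hcliques : ∀ k, IsMaxClique (spGraph V hs) (β k))
    (hall : ∀ s : Finset (Fin p), IsMaxClique (spGraph V hs) s → ∃ k, s = β k)
    (X : Matrix (Fin p) (Fin p) ℝ) (hXsymm : X.IsSymm) :
    (∃ Z : Matrix (Fin p) (Fin p) ℝ, Z.PosSemidef ∧
        ∀ i j, (i, j) ∈ V → Z i j = X i j)
    ↔ ∀ k, (X.submatrix (fun i : {a // a ∈ β k} => (i : Fin p))
              (fun j : {a // a ∈ β k} => (j : Fin p))).PosSemidef := by
  have hV : ∀ i j, (i, j) ∈ V ↔ i = j ∨ (spGraph V hs).Adj i j := fun i j =>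
    ⟨fun h => or_iff_not_imp_left.2 fun hij => ⟨hij, h⟩, by rintro (rfl | h); exacts [hdiag i, h.2]⟩
  simp only [hV]
  rw [← isPosSemidefOnCliques_iff_of_isMaxClique hcliques hall]
  exact SimpleGraph.IsChordal.exists_posSemidef_completion_iff hchordal hXsymm

theorem stmt12 {p l : ℕ} (V : Set (Fin p × Fin p))
    (hs : ∀ i j, (i, j) ∈ V → (j, i) ∈ V)
    (hdiag : ∀ i, (i, i) ∈ V)
    (hchordal : Chordal (spGraph V hs))
    (β : Fin l → Finset (Fin p))
    (hcliques : ∀ k, IsMaxClique (spGraph V hs) (β k))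
    (hall : ∀ s : Finset (Fin p), IsMaxClique (spGraph V hs) s → ∃ k, s = β k)
    (X : Matrix (Fin p) (Fin p) ℝ) (hXsymm : X.IsSymm)
    (hXsp : ∀ i j, (i, j) ∉ V → X i j = 0) :
    (∃ Z : Matrix (Fin p) (Fin p) ℝ, Z.PosSemidef ∧
        ∀ i j, (i, j) ∈ V → Z i j = X i j)
    ↔ ∀ k, (X.submatrix (fun i : {a // a ∈ β k} => (i : Fin p))
              (fun j : {a // a ∈ β k} => (j : Fin p))).PosSemidef :=
  stmt12_general V hs hdiag hchordal β hcliques hall X hXsymm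
end

section
/- Let V be a sparsity pattern of order p containing all diagonal entries. Then the cone S^p_{V,c+} of matrices in S^p_V having a positive semidefinite completion and the cone S^p_{V,+} of positive semidefinite matrices in S^p_V form a dual pair: for the trace inner product on S^p_V, (S^p_{V,+})^* = S^p_{V,c+} and (S^p_{V,c+})^* = S^p_{V,+}. -/
/-!
The inclusions of the primal cones into the duals rest on `tr (X * Y) = tr (Z * Y)` whenever
`Y` vanishes off `V` and `X`, `Z` agree on `V`, together with `0 ≤ tr (Z * Y)` for p.s.d. `Z`, `Y`.
Pairing with the projections `P_V (v vᵀ)` of rank-one matrices shows that the dual of the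
completable cone consists of p.s.d. matrices.

For the converse inclusion into the completable cone, note that this cone is closed: since `V`
contains the diagonal, a completion has a prescribed diagonal, and p.s.d. matrices with bounded
diagonal form a compact set. A matrix `Y` outside it is separated from it by a functional
`X ↦ tr (X * B)`, and `P_V (B + Bᵀ)` is then a p.s.d. element of `S^p_V` pairing negatively with `Y`.
-/

open Matrix Set

namespace Matrix

variable {n : Type*}

-- Instance search does not see through the type synonym `Matrix`.
instance {m : Type*} : LocallyConvexSpace ℝ (Matrix m n ℝ) := Pi.locallyConvexSpace

variable (n) in
def psdCone : PointedCone ℝ (Matrix n n ℝ) where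
  carrier := {Z | Z.PosSemidef}
  add_mem' := PosSemidef.add
  zero_mem' := PosSemidef.zero
  smul_mem' c _ hZ := hZ.smul c.2

variable [Fintype n]

lemma trace_mul_vecMulVec_self (Y : Matrix n n ℝ) (v : n → ℝ) :
    (Y * vecMulVec v v).trace = v ⬝ᵥ Y *ᵥ v := by
  rw [mul_vecMulVec, trace_vecMulVec, dotProduct_comm]

lemma PosSemidef.trace_mul_nonneg {X Y : Matrix n n ℝ} (hX : X.PosSemidef) (hY : Y.PosSemidef) :
    0 ≤ (X * Y).trace := by
  obtain ⟨m, v, rfl⟩ := posSemidef_iff_eq_sum_vecMulVec.mp hX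
  rw [Finset.sum_mul, trace_sum]
  refine Finset.sum_nonneg fun i _ => ?_
  rw [trace_mul_comm, star_trivial, trace_mul_vecMulVec_self]
  simpa using hY.dotProduct_mulVec_nonneg (v i)

lemma PosSemidef.two_mul_abs_apply_le [DecidableEq n] {Z : Matrix n n ℝ} (hZ : Z.PosSemidef)
    (i j : n) : 2 * |Z i j| ≤ Z i i + Z j j := by
  have quad (s : ℝ) :
      (Pi.single i 1 + s • Pi.single j 1) ⬝ᵥ Z *ᵥ (Pi.single i 1 + s • Pi.single j 1)
        = Z i i + s * (Z i j + Z j i) + s ^ 2 * Z j j := by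
    simp only [mulVec_add, mulVec_smul, mulVec_single, MulOpposite.op_one, one_smul, col_apply,
      dotProduct_add, add_dotProduct, single_dotProduct, smul_dotProduct, dotProduct_smul,
      smul_eq_mul, one_mul]
    ring
  have hji : Z j i = Z i j := by simpa using congrFun₂ hZ.isHermitian i j
  have h₁ := hZ.dotProduct_mulVec_nonneg (Pi.single i 1 + (1 : ℝ) • Pi.single j 1)
  have h₂ := hZ.dotProduct_mulVec_nonneg (Pi.single i 1 + (-1 : ℝ) • Pi.single j 1)
  rw [star_trivial, quad] at h₁ h₂
  cases abs_cases (Z i j) <;> linarith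

lemma isClosed_setOf_posSemidef : IsClosed {Z : Matrix n n ℝ | Z.PosSemidef} := by
  simp only [posSemidef_iff_dotProduct_mulVec, ofPred_and, ofPred_forall]
  exact (isClosed_eq continuous_id.matrix_conjTranspose continuous_id).inter <|
    isClosed_iInter fun v => isClosed_le continuous_const <|
      continuous_const.dotProduct (continuous_id.matrix_mulVec continuous_const)

lemma isCompact_setOf_posSemidef_diag_le (d : n → ℝ) :
    IsCompact {Z : Matrix n n ℝ | Z.PosSemidef ∧ ∀ i, Z i i ≤ d i} := by
  classical
  have hbox : IsCompact (univ.pi fun i => univ.pi fun j =>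
      Icc (-((d i + d j) / 2)) ((d i + d j) / 2) : Set (n → n → ℝ)) :=
    isCompact_univ_pi fun i => isCompact_univ_pi fun j => isCompact_Icc
  refine hbox.of_isClosed_subset ?_ ?_
  · simp only [ofPred_and, ofPred_forall]
    exact isClosed_setOf_posSemidef.inter <| isClosed_iInter fun i =>
      isClosed_le (continuous_id.matrix_elem i i) continuous_const
  · rintro Z ⟨hZ, hd⟩ i - j -
    constructor <;> cases abs_cases (Z i j) <;> linarith [hZ.two_mul_abs_apply_le i j, hd i, hd j]

lemma exists_trace_mul_eq (f : Matrix n n ℝ →ₗ[ℝ] ℝ) :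
    ∃ B : Matrix n n ℝ, ∀ X, f X = (X * B).trace := by
  classical
  refine ⟨of fun i j => f (single j i 1), fun X => ?_⟩
  calc f X = f (∑ i, ∑ j, X i j • single i j 1) := by
        simp only [smul_single, smul_eq_mul, mul_one, ← matrix_eq_sum_single]
    _ = (X * of fun i j => f (single j i 1)).trace := by
        simp only [map_sum, map_smul, smul_eq_mul, trace, diag_apply, mul_apply, of_apply]

end Matrix

namespace SparsePattern

variable {n : Type*} {V : Set (n × n)}

-- The paper's `S^p_V`.
def symmSpace (V : Set (n × n)) : Set (Matrix n n ℝ) :=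
  {X | X.IsSymm ∧ ∀ i j, (i, j) ∉ V → X i j = 0}

open scoped Classical in
noncomputable def proj (V : Set (n × n)) : Matrix n n ℝ →ₗ[ℝ] Matrix n n ℝ where
  toFun M := of fun i j => if (i, j) ∈ V then M i j else 0
  map_add' A B := by ext i j; by_cases h : (i, j) ∈ V <;> simp [h]
  map_smul' c A := by ext i j; by_cases h : (i, j) ∈ V <;> simp [h]

lemma proj_apply_of_mem {M : Matrix n n ℝ} {i j : n} (h : (i, j) ∈ V) : proj V M i j = M i j :=
  if_pos h

lemma proj_apply_of_notMem {M : Matrix n n ℝ} {i j : n} (h : (i, j) ∉ V) : proj V M i j = 0 :=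
  if_neg h

lemma proj_mem_symmSpace (hs : ∀ i j, (i, j) ∈ V → (j, i) ∈ V) {Z : Matrix n n ℝ}
    (hZ : Z.IsSymm) : proj V Z ∈ symmSpace V := by
  refine ⟨IsSymm.ext fun i j => ?_, fun i j h => proj_apply_of_notMem h⟩
  by_cases h : (i, j) ∈ V
  · rw [proj_apply_of_mem h, proj_apply_of_mem (hs i j h), hZ.apply]
  · rw [proj_apply_of_notMem h, proj_apply_of_notMem fun h' => h (hs j i h')]

noncomputable def completableCone (V : Set (n × n)) : PointedCone ℝ (Matrix n n ℝ) :=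
  (psdCone n).map (proj V)

lemma mem_completableCone {X : Matrix n n ℝ} :
    X ∈ completableCone V ↔ ∃ Z : Matrix n n ℝ, Z.PosSemidef ∧ proj V Z = X :=
  PointedCone.mem_map

lemma mem_completableCone_iff_exists_completion (hs : ∀ i j, (i, j) ∈ V → (j, i) ∈ V) {X : Matrix n n ℝ} :
    X ∈ completableCone V ↔
      X ∈ symmSpace V ∧ ∃ Z : Matrix n n ℝ, Z.PosSemidef ∧ ∀ i j, (i, j) ∈ V → Z i j = X i j := by
  rw [mem_completableCone]
  constructor
  · rintro ⟨Z, hZ, rfl⟩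
    exact ⟨proj_mem_symmSpace hs (isHermitian_iff_isSymm.mp hZ.isHermitian), Z, hZ,
      fun i j h => (proj_apply_of_mem h).symm⟩
  · rintro ⟨⟨-, hX⟩, Z, hZ, hZX⟩
    refine ⟨Z, hZ, ext fun i j => ?_⟩
    by_cases h : (i, j) ∈ V
    · rw [proj_apply_of_mem h, hZX i j h]
    · rw [proj_apply_of_notMem h, hX i j h]

variable [Fintype n]

lemma proj_vecMulVec_mem_completableCone (v : n → ℝ) :
    proj V (vecMulVec v v) ∈ completableCone V :=
  mem_completableCone.mpr ⟨vecMulVec v v, by simpa using posSemidef_vecMulVec_self_star v, rfl⟩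

lemma trace_mul_congr (hs : ∀ i j, (i, j) ∈ V → (j, i) ∈ V) {X Y Z : Matrix n n ℝ}
    (hX : ∀ i j, (i, j) ∉ V → X i j = 0) (hYZ : ∀ i j, (i, j) ∈ V → Y i j = Z i j) :
    (X * Y).trace = (X * Z).trace := by
  simp only [trace, diag_apply, mul_apply]
  refine Finset.sum_congr rfl fun i _ => Finset.sum_congr rfl fun j _ => ?_
  by_cases h : (i, j) ∈ V
  · rw [hYZ j i (hs i j h)]
  · rw [hX i j h, zero_mul, zero_mul]

lemma trace_proj_vecMulVec_mul (hs : ∀ i j, (i, j) ∈ V → (j, i) ∈ V) {Y : Matrix n n ℝ}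
    (hY : ∀ i j, (i, j) ∉ V → Y i j = 0) (v : n → ℝ) :
    (proj V (vecMulVec v v) * Y).trace = v ⬝ᵥ Y *ᵥ v := by
  rw [trace_mul_comm, trace_mul_congr hs hY fun i j h => proj_apply_of_mem h,
    trace_mul_vecMulVec_self]

lemma trace_mul_proj_add_transpose (hs : ∀ i j, (i, j) ∈ V → (j, i) ∈ V) {X : Matrix n n ℝ}
    (hX : X ∈ symmSpace V) (B : Matrix n n ℝ) :
    (X * proj V (B + Bᵀ)).trace = 2 * (X * B).trace := by
  have hXBt : (X * Bᵀ).trace = (X * B).trace := by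
    conv_lhs => rw [← hX.1]
    exact trace_transpose_mul X B
  rw [trace_mul_congr hs hX.2 fun i j h => proj_apply_of_mem h, Matrix.mul_add, trace_add, hXBt]
  ring

lemma isClosed_completableCone (hdiag : ∀ i, (i, i) ∈ V) :
    IsClosed (completableCone V : Set (Matrix n n ℝ)) := by
  refine isClosed_of_closure_subset fun X hX => ?_
  let d i := X i i + 1
  let U := {Y : Matrix n n ℝ | ∀ i, Y i i < d i}
  let K := {Z : Matrix n n ℝ | Z.PosSemidef ∧ ∀ i, Z i i ≤ d i}
  have hU : IsOpen U := by
    simp only [U, ofPred_forall]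
    exact isOpen_iInter_of_finite fun i => isOpen_lt (continuous_id.matrix_elem i i) continuous_const
  have hXU : X ∈ closure (U ∩ completableCone V) := hU.inter_closure ⟨fun i => lt_add_one _, hX⟩
  have hK : U ∩ completableCone V ⊆ proj V '' K := by
    rintro _ ⟨hd, hY⟩
    obtain ⟨Z, hZ, rfl⟩ := mem_completableCone.mp hY
    exact ⟨Z, ⟨hZ, fun i => by simpa [proj_apply_of_mem (hdiag i)] using (hd i).le⟩, rfl⟩
  have hKclosed : IsClosed (proj V '' K) :=
    ((isCompact_setOf_posSemidef_diag_le d).image (proj V).continuous_of_finiteDimensional).isClosed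
  obtain ⟨Z, hZ, hZX⟩ := closure_minimal hK hKclosed hXU
  exact mem_completableCone.mpr ⟨Z, hZ.1, hZX⟩

lemma mem_completableCone_of_forall_trace_mul_nonneg (hs : ∀ i j, (i, j) ∈ V → (j, i) ∈ V)
    (hdiag : ∀ i, (i, i) ∈ V) {Y : Matrix n n ℝ} (hY : Y ∈ symmSpace V)
    (hdual : ∀ X ∈ symmSpace V, X.PosSemidef → 0 ≤ (X * Y).trace) :
    Y ∈ completableCone V := by
  by_contra hYC
  obtain ⟨f, hfC, hfY⟩ := ProperCone.hyperplane_separation_point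
    ⟨completableCone V, isClosed_completableCone hdiag⟩ hYC
  obtain ⟨B, hB⟩ := exists_trace_mul_eq f.toLinearMap
  simp only [ContinuousLinearMap.coe_coe] at hB
  have hA : proj V (B + Bᵀ) ∈ symmSpace V := proj_mem_symmSpace hs (isSymm_add_transpose_self B)
  have hApsd : (proj V (B + Bᵀ)).PosSemidef := by
    refine posSemidef_iff_dotProduct_mulVec.mpr ⟨isHermitian_iff_isSymm.mpr hA.1, fun v => ?_⟩
    have hv := proj_vecMulVec_mem_completableCone (V := V) v
    rw [star_trivial, ← trace_proj_vecMulVec_mul hs hA.2,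
      trace_mul_proj_add_transpose hs ((mem_completableCone_iff_exists_completion hs).mp hv).1, ← hB]
    exact mul_nonneg zero_le_two (hfC _ hv)
  have hAY := hdual _ hA hApsd
  rw [trace_mul_comm, trace_mul_proj_add_transpose hs hY, ← hB] at hAY
  linarith

lemma posSemidef_of_forall_trace_mul_nonneg (hs : ∀ i j, (i, j) ∈ V → (j, i) ∈ V)
    {Y : Matrix n n ℝ} (hY : Y ∈ symmSpace V)
    (hdual : ∀ X ∈ completableCone V, 0 ≤ (X * Y).trace) : Y.PosSemidef := by
  refine posSemidef_iff_dotProduct_mulVec.mpr ⟨isHermitian_iff_isSymm.mpr hY.1, fun v => ?_⟩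
  rw [star_trivial, ← trace_proj_vecMulVec_mul hs hY.2]
  exact hdual _ (proj_vecMulVec_mem_completableCone v)

end SparsePattern

open SparsePattern

theorem stmt14 {p : ℕ} (V : Set (Fin p × Fin p))
    (hs : ∀ i j, (i, j) ∈ V → (j, i) ∈ V)
    (hdiag : ∀ i, (i, i) ∈ V) :
    -- the dual (within `S^p_V`, w.r.t. the trace inner product) of the sparse p.s.d. cone
    -- is the p.s.d.-completable cone, and conversely
    ({Y : Matrix (Fin p) (Fin p) ℝ |
        (Y.IsSymm ∧ ∀ i j, (i, j) ∉ V → Y i j = 0) ∧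
        ∀ X : Matrix (Fin p) (Fin p) ℝ,
          (X.IsSymm ∧ ∀ i j, (i, j) ∉ V → X i j = 0) → X.PosSemidef →
            0 ≤ (X * Y).trace}
      = {X : Matrix (Fin p) (Fin p) ℝ |
          (X.IsSymm ∧ ∀ i j, (i, j) ∉ V → X i j = 0) ∧
          ∃ Z : Matrix (Fin p) (Fin p) ℝ, Z.PosSemidef ∧
            ∀ i j, (i, j) ∈ V → Z i j = X i j}) ∧
    ({Y : Matrix (Fin p) (Fin p) ℝ |
        (Y.IsSymm ∧ ∀ i j, (i, j) ∉ V → Y i j = 0) ∧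
        ∀ X : Matrix (Fin p) (Fin p) ℝ,
          (X.IsSymm ∧ ∀ i j, (i, j) ∉ V → X i j = 0) →
          (∃ Z : Matrix (Fin p) (Fin p) ℝ, Z.PosSemidef ∧
            ∀ i j, (i, j) ∈ V → Z i j = X i j) →
            0 ≤ (X * Y).trace}
      = {X : Matrix (Fin p) (Fin p) ℝ |
          (X.IsSymm ∧ ∀ i j, (i, j) ∉ V → X i j = 0) ∧ X.PosSemidef}) := by
  constructor
  · ext Y
    refine ⟨fun ⟨hY, hdual⟩ => (mem_completableCone_iff_exists_completion hs).mp
      (mem_completableCone_of_forall_trace_mul_nonneg hs hdiag hY hdual), ?_⟩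
    rintro ⟨hY, Z, hZ, hZY⟩
    refine ⟨hY, fun X hX hXpsd => ?_⟩
    rw [trace_mul_congr hs hX.2 fun i j h => (hZY i j h).symm]
    exact hXpsd.trace_mul_nonneg hZ
  · ext Y
    refine ⟨fun ⟨hY, hdual⟩ => ⟨hY, posSemidef_of_forall_trace_mul_nonneg hs hY fun X hX =>
      ((mem_completableCone_iff_exists_completion hs).mp hX).elim (hdual X)⟩, ?_⟩
    rintro ⟨hY, hYpsd⟩
    refine ⟨hY, fun X _ ⟨Z, hZ, hZX⟩ => ?_⟩
    rw [trace_mul_comm, trace_mul_congr hs hY.2 fun i j h => (hZX i j h).symm, trace_mul_comm]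
    exact hZ.trace_mul_nonneg hYpsd
end
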